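/- Let ⊑ be a reduction concept on Baire space that extends Turing reducibility and is closed under composition. Then B(≠*) ⊆ D(∈*): if there is y ⊑ x which is eventually different from every basic real, then there is y' ⊑ x which is not eventually captured by any basic slalom. -/

import Mathlib

/-- Partial functions `ℕ →. ℕ` computable relative to an oracle `O : ℕ → ℕ`
(Turing reducibility, defined as in `Nat.Partrec` with an extra oracle clause). -/
inductive RecursiveInSingle (O : ℕ → ℕ) : (ℕ →. ℕ) → Prop
  | oracle : RecursiveInSingle O (fun n => Part.some (O n))
  | zero : RecursiveInSingle O (pure 0)
  | succ : RecursiveInSingle O (fun n => Part.some (Nat.succ n))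
  | left : RecursiveInSingle O (fun n : ℕ => Part.some n.unpair.1)
  | right : RecursiveInSingle O (fun n : ℕ => Part.some n.unpair.2)
  | pair {f g : ℕ →. ℕ} : RecursiveInSingle O f → RecursiveInSingle O g →
      RecursiveInSingle O (fun n => Nat.pair <$> f n <*> g n)
  | comp {f g : ℕ →. ℕ} : RecursiveInSingle O f → RecursiveInSingle O g →
      RecursiveInSingle O (fun n => g n >>= f)
  | prec {f g : ℕ →. ℕ} : RecursiveInSingle O f → RecursiveInSingle O g →
      RecursiveInSingle O (Nat.unpaired fun a n =>
        n.rec (f a) fun y IH => do let i ← IH; g (Nat.pair a (Nat.pair y i)))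
  | rfind {f : ℕ →. ℕ} : RecursiveInSingle O f →
      RecursiveInSingle O (fun a => Nat.rfind fun n => (fun m => m = 0) <$> f (Nat.pair a n))

/-- Turing reducibility `f ≤ᵀ g` for total functions on `ℕ`. -/
def TuringLE (f g : ℕ → ℕ) : Prop :=
  RecursiveInSingle g (fun n => Part.some (f n))

/-- The constant zero function, the distinguished point `0` of Baire space. -/
def baireZero : ℕ → ℕ := fun _ => 0

section
variable (r : (ℕ → ℕ) → (ℕ → ℕ) → Prop)

/-- `y` is basic (for the reduction concept `⊑` = `r`) if `y ⊑ 0`. -/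
def IsBasic (y : ℕ → ℕ) : Prop := r y baireZero

/-- `f ≤* g` : eventual domination. -/
def EvDom (f g : ℕ → ℕ) : Prop := ∃ N, ∀ n ≥ N, f n ≤ g n

/-- `f ≠* g` : eventual difference. -/
def EvDiff (f g : ℕ → ℕ) : Prop := ∃ N, ∀ n ≥ N, f n ≠ g n

/-- An `h`-slalom: `|σ n| ≤ h n` for all `n`. -/
def IsHSlalom (h : ℕ → ℕ) (σ : ℕ → Finset ℕ) : Prop := ∀ n, (σ n).card ≤ h n

/-- A slalom: `|σ n| ≤ n` for all `n`. -/
def IsSlalom (σ : ℕ → Finset ℕ) : Prop := ∀ n, (σ n).card ≤ n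

/-- The real coding a slalom. -/
def slalomCode (σ : ℕ → Finset ℕ) : ℕ → ℕ := fun n => Encodable.encode (σ n)

/-- `f ∈* σ` : `f` is eventually captured by the slalom `σ`. -/
def EvCapt (f : ℕ → ℕ) (σ : ℕ → Finset ℕ) : Prop := ∃ N, ∀ n ≥ N, f n ∈ σ n

/-- `B(≤*)`: the set of `x` building a real eventually dominating all basic reals. -/
def BLeStar : Set (ℕ → ℕ) := {x | ∃ y, r y x ∧ ∀ z, IsBasic r z → EvDom z y}

/-- `B(≠*)`: the set of `x` building a real eventually different from all basic reals. -/
def BNeStar : Set (ℕ → ℕ) := {x | ∃ y, r y x ∧ ∀ z, IsBasic r z → EvDiff z y}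

/-- `B(∈*)`: the set of `x` building a slalom eventually capturing all basic reals. -/
def BInStar : Set (ℕ → ℕ) :=
  {x | ∃ σ : ℕ → Finset ℕ, IsSlalom σ ∧ r (slalomCode σ) x ∧ ∀ z, IsBasic r z → EvCapt z σ}

/-- `D(≤*)`: the set of `x` building a real not eventually dominated by any basic real. -/
def DLeStar : Set (ℕ → ℕ) := {x | ∃ y, r y x ∧ ∀ z, IsBasic r z → ¬ EvDom y z}

/-- `D(≠*)`: the set of `x` building a real infinitely often equal to every basic real. -/
def DNeStar : Set (ℕ → ℕ) := {x | ∃ y, r y x ∧ ∀ z, IsBasic r z → ¬ EvDiff y z}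

/-- `D(∈*)`: the set of `x` building a real not eventually captured by any basic slalom. -/
def DInStar : Set (ℕ → ℕ) :=
  {x | ∃ y, r y x ∧ ∀ σ : ℕ → Finset ℕ, IsSlalom σ → IsBasic r (slalomCode σ) → ¬ EvCapt y σ}

end

theorem RecursiveInSingle.of_partrec {O : ℕ → ℕ} {f : ℕ →. ℕ} (h : Nat.Partrec f) :
    RecursiveInSingle O f := by
  induction h with
  | zero => exact RecursiveInSingle.zero
  | succ => exact RecursiveInSingle.succ
  | left => exact RecursiveInSingle.left
  | right => exact RecursiveInSingle.right
  | pair _ _ ih1 ih2 => exact RecursiveInSingle.pair ih1 ih2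
  | comp _ _ ih1 ih2 => exact RecursiveInSingle.comp ih1 ih2
  | prec _ _ ih1 ih2 => exact RecursiveInSingle.prec ih1 ih2
  | rfind _ ih => exact RecursiveInSingle.rfind ih

def RecIn (O : ℕ → ℕ) (f : ℕ → ℕ) : Prop := RecursiveInSingle O (fun n => Part.some (f n))

theorem RecIn.of_computable {O : ℕ → ℕ} {f : ℕ → ℕ} (h : Computable f) : RecIn O f :=
  RecursiveInSingle.of_partrec (Partrec.nat_iff.1 h)

theorem RecIn.oracle (O : ℕ → ℕ) : RecIn O O := RecursiveInSingle.oracle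

theorem RecIn.comp {O f g : ℕ → ℕ} (hf : RecIn O f) (hg : RecIn O g) :
    RecIn O (fun n => f (g n)) := by
  have := RecursiveInSingle.comp (O := O) hf hg
  simpa [RecIn] using this

theorem RecIn.pair {O f g : ℕ → ℕ} (hf : RecIn O f) (hg : RecIn O g) :
    RecIn O (fun n => Nat.pair (f n) (g n)) := by
  have := RecursiveInSingle.pair (O := O) hf hg
  simpa [Seq.seq, RecIn] using this

def decodeL (k : ℕ) : List ℕ := (Encodable.decode (α := List ℕ) k).getD []

theorem decodeL_encode (l : List ℕ) : decodeL (Encodable.encode l) = l := by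
  simp [decodeL, Encodable.encodek]

theorem primrec_decodeL : Primrec decodeL :=
  Primrec.option_getD.comp (Primrec.decode) (Primrec.const [])

def obar (O : ℕ → ℕ) (n : ℕ) : ℕ := Encodable.encode (List.map O (List.range n))

theorem recIn_obar (O : ℕ → ℕ) : RecIn O (obar O) := by
  set G : ℕ → ℕ := fun k =>
    Encodable.encode ((decodeL k.unpair.2.unpair.2) ++ [O k.unpair.2.unpair.1]) with hG
  have hGrec : RecIn O G := by
    have hq : RecIn O (fun k => Nat.pair k.unpair.2.unpair.2 (O k.unpair.2.unpair.1)) :=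
      RecIn.pair
        (.of_computable (Primrec.snd.comp
          (Primrec.unpair.comp (Primrec.snd.comp Primrec.unpair))).to_comp)
        (RecIn.comp (RecIn.oracle O) (.of_computable (Primrec.fst.comp
          (Primrec.unpair.comp (Primrec.snd.comp Primrec.unpair))).to_comp))
    have hH : Computable fun p : ℕ => Encodable.encode ((decodeL p.unpair.1) ++ [p.unpair.2]) :=
      (Primrec.encode.comp
        (Primrec.list_append.comp (primrec_decodeL.comp (Primrec.fst.comp Primrec.unpair))
          ((Primrec.list_cons.comp (Primrec.snd.comp Primrec.unpair)
            (Primrec.const []))))).to_comp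
    have h2 := RecIn.comp (RecIn.of_computable hH) hq
    have heq : (fun k => (fun p : ℕ => Encodable.encode ((decodeL p.unpair.1) ++ [p.unpair.2]))
        ((fun k => Nat.pair k.unpair.2.unpair.2 (O k.unpair.2.unpair.1)) k)) = G := by
      funext k
      simp [hG, Nat.unpair_pair]
    rwa [heq] at h2
  have hconst : RecursiveInSingle O (fun _ : ℕ => Part.some (Encodable.encode ([] : List ℕ))) :=
    RecIn.of_computable (Computable.const _)
  have hgp : RecursiveInSingle O (fun k => Part.some (G k)) := hGrec
  have hprec := RecursiveInSingle.prec hconst hgp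
  have key : ∀ a n : ℕ, (Nat.rec (motive := fun _ => Part ℕ)
      (Part.some (Encodable.encode ([] : List ℕ)))
      (fun y IH => IH >>= fun i => Part.some (G (Nat.pair a (Nat.pair y i)))) n)
      = Part.some (obar O n) := by
    intro a n
    induction n with
    | zero => simp [obar]
    | succ n ih =>
      show (Nat.rec _ _ n >>= fun i => Part.some (G (Nat.pair a (Nat.pair n i)))) = _
      rw [ih]
      simp [hG, Nat.unpair_pair, decodeL_encode, obar, List.range_succ]
  have hp : RecIn O (fun n => Nat.pair 0 n) :=
    RecIn.pair (.of_computable (Computable.const 0)) (.of_computable Computable.id)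
  have h3 := RecursiveInSingle.comp hprec hp
  have heq2 : (fun n => Part.some (Nat.pair 0 n) >>= (Nat.unpaired fun a n =>
      n.rec (Part.some (Encodable.encode ([] : List ℕ)))
        fun y IH => do let i ← IH; Part.some (G (Nat.pair a (Nat.pair y i)))))
      = fun n => Part.some (obar O n) := by
    funext n
    have : Part.some (Nat.pair 0 n) >>= (Nat.unpaired fun a n =>
      n.rec (Part.some (Encodable.encode ([] : List ℕ)))
        fun y IH => do let i ← IH; Part.some (G (Nat.pair a (Nat.pair y i)))) =
        (Nat.unpaired fun a n =>
      n.rec (Part.some (Encodable.encode ([] : List ℕ)))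
        fun y IH => do let i ← IH; Part.some (G (Nat.pair a (Nat.pair y i)))) (Nat.pair 0 n) := by
      simp
    rw [this]
    simpa [Nat.unpaired] using key 0 n
  rwa [heq2] at h3

theorem turingLE_mk {O : ℕ → ℕ} {F u : ℕ → ℕ} (hF : Computable F) (hu : Computable u) :
    RecIn O (fun n => F (Nat.pair n (obar O (u n)))) :=
  RecIn.comp (.of_computable hF)
    (RecIn.pair (.of_computable Computable.id) (RecIn.comp (recIn_obar O) (.of_computable hu)))


theorem finset_encode_sort (s : Finset ℕ) :
    Encodable.encode s = Encodable.encode (s.sort (· ≤ ·)) := rfl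

def yblock (y : ℕ → ℕ) (n : ℕ) : ℕ :=
  Encodable.encode (List.map (fun j => y (n * n + j)) (List.range n))

theorem recIn_yblock (y : ℕ → ℕ) : RecIn y (yblock y) := by
  have h1 : Primrec fun p : ℕ => p.unpair.1 := Primrec.fst.comp Primrec.unpair
  have h2 : Primrec fun p : ℕ => p.unpair.2 := Primrec.snd.comp Primrec.unpair
  have hF : Computable fun p : ℕ =>
      Encodable.encode (List.map (fun j => (decodeL p.unpair.2).getD
        (p.unpair.1 * p.unpair.1 + j) 0) (List.range p.unpair.1)) := by
    have hg : Primrec₂ fun (p : ℕ) (j : ℕ) => (decodeL p.unpair.2).getD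
        (p.unpair.1 * p.unpair.1 + j) 0 := by
      have a1 : Primrec fun q : ℕ × ℕ => q.1.unpair.1 :=
        h1.comp Primrec.fst
      exact (Primrec.list_getD 0).comp₂
        ((primrec_decodeL.comp (h2.comp Primrec.fst)).comp₂ Primrec₂.pair)
        ((Primrec.nat_add.comp (Primrec.nat_mul.comp a1 a1) Primrec.snd).comp₂ Primrec₂.pair)
    exact (Primrec.encode.comp
      (Primrec.list_map (Primrec.list_range.comp h1) hg)).to_comp
  have hu : Computable fun n : ℕ => n * n + n :=
    (Primrec.nat_add.comp (Primrec.nat_mul.comp Primrec.id Primrec.id) Primrec.id).to_comp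
  have h := turingLE_mk (O := y) hF hu
  have heq : (fun n => (fun p : ℕ =>
      Encodable.encode (List.map (fun j => (decodeL p.unpair.2).getD
        (p.unpair.1 * p.unpair.1 + j) 0) (List.range p.unpair.1)))
      (Nat.pair n (obar y ((fun n : ℕ => n * n + n) n)))) = yblock y := by
    funext n
    simp only [Nat.unpair_pair, obar, decodeL_encode, yblock]
    congr 1
    refine List.map_congr_left ?_
    intro j hj
    rw [List.mem_range] at hj
    rw [List.getD_eq_getElem _ _ (by simp; omega)]
    simp
  rwa [heq] at h

def zfun (c : ℕ → ℕ) (m : ℕ) : ℕ :=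
  (decodeL ((decodeL ((decodeL (obar c (m.sqrt + 1))).getD m.sqrt 0)).getD
      (m - m.sqrt * m.sqrt) 0)).getD (m - m.sqrt * m.sqrt) 0

theorem recIn_zfun (c : ℕ → ℕ) : RecIn c (zfun c) := by
  have h1 : Primrec fun p : ℕ => p.unpair.1 := Primrec.fst.comp Primrec.unpair
  have h2 : Primrec fun p : ℕ => p.unpair.2 := Primrec.snd.comp Primrec.unpair
  have hsq : Primrec fun p : ℕ => p.unpair.1.sqrt := Primrec.nat_sqrt.comp h1
  have hi : Primrec fun p : ℕ => p.unpair.1 - p.unpair.1.sqrt * p.unpair.1.sqrt :=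
    Primrec.nat_sub.comp h1 (Primrec.nat_mul.comp hsq hsq)
  have hF : Computable fun p : ℕ =>
      (decodeL ((decodeL ((decodeL p.unpair.2).getD p.unpair.1.sqrt 0)).getD
        (p.unpair.1 - p.unpair.1.sqrt * p.unpair.1.sqrt) 0)).getD
        (p.unpair.1 - p.unpair.1.sqrt * p.unpair.1.sqrt) 0 := by
    have s1 : Primrec fun p : ℕ => (decodeL p.unpair.2).getD p.unpair.1.sqrt 0 :=
      (Primrec.list_getD 0).comp (primrec_decodeL.comp h2) hsq
    have s2 : Primrec fun p : ℕ => (decodeL ((decodeL p.unpair.2).getD p.unpair.1.sqrt 0)).getD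
        (p.unpair.1 - p.unpair.1.sqrt * p.unpair.1.sqrt) 0 :=
      (Primrec.list_getD 0).comp (primrec_decodeL.comp s1) hi
    exact ((Primrec.list_getD 0).comp (primrec_decodeL.comp s2) hi).to_comp
  have hu : Computable fun m : ℕ => m.sqrt + 1 :=
    (Primrec.succ.comp Primrec.nat_sqrt).to_comp
  have h := turingLE_mk (O := c) hF hu
  have heq : (fun m => (fun p : ℕ =>
      (decodeL ((decodeL ((decodeL p.unpair.2).getD p.unpair.1.sqrt 0)).getD
        (p.unpair.1 - p.unpair.1.sqrt * p.unpair.1.sqrt) 0)).getD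
        (p.unpair.1 - p.unpair.1.sqrt * p.unpair.1.sqrt) 0)
      (Nat.pair m (obar c ((fun m : ℕ => m.sqrt + 1) m)))) = zfun c := by
    funext m
    simp [zfun, Nat.unpair_pair]
  rwa [heq] at h

theorem zfun_eval (c : ℕ → ℕ) (n i : ℕ) (hin : i < n) :
    zfun c (n * n + i) = (decodeL ((decodeL (c n)).getD i 0)).getD i 0 := by
  have hs : (n * n + i).sqrt = n := by
    have h1 : n ≤ (n * n + i).sqrt := Nat.le_sqrt.2 (Nat.le_add_right _ _)
    have h2 : (n * n + i).sqrt < n + 1 := Nat.sqrt_lt.2 (by nlinarith)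
    omega
  have hii : n * n + i - n * n = i := by omega
  rw [zfun, hs, hii]
  have hget : (decodeL (obar c (n + 1))).getD n 0 = c n := by
    rw [obar, decodeL_encode]
    rw [List.getD_eq_getElem _ _ (by simp)]
    simp
  rw [hget]

theorem stmt_7 (r : (ℕ → ℕ) → (ℕ → ℕ) → Prop)
    (hrefl : ∀ f, r f f) (htrans : ∀ f g h, r f g → r g h → r f h)
    (hT : ∀ f g, TuringLE f g → r f g)
    (hcomp : ∀ f g h, r f h → r g h → r (f ∘ g) h) :
    BNeStar r ⊆ DInStar r := by
  rintro x ⟨y, hyx, hy⟩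
  refine ⟨yblock y, htrans _ _ _ (hT _ _ (recIn_yblock y)) hyx, ?_⟩
  intro σ hσ hbasic hcapt
  obtain ⟨N, hN⟩ := hcapt
  set c := slalomCode σ with hc
  have hzbasic : IsBasic r (zfun c) := htrans _ _ _ (hT _ _ (recIn_zfun c)) hbasic
  obtain ⟨M, hM⟩ := hy _ hzbasic
  set n := N + M + 1 with hn
  have hcap : yblock y n ∈ σ n := hN n (by omega)
  set L := List.map (fun j => y (n * n + j)) (List.range n) with hL
  set sl := (σ n).sort (· ≤ ·) with hsl
  have hmem : Encodable.encode L ∈ sl := (Finset.mem_sort _).2 hcap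
  have hilt : sl.idxOf (Encodable.encode L) < sl.length := List.idxOf_lt_length_iff.2 hmem
  set i := sl.idxOf (Encodable.encode L) with hi
  have hslen : sl.length = (σ n).card := Finset.length_sort _
  have hin : i < n := lt_of_lt_of_le (hslen ▸ hilt) (hσ n)
  have hcn : c n = Encodable.encode sl := finset_encode_sort (σ n)
  have hz : zfun c (n * n + i) = y (n * n + i) := by
    rw [zfun_eval c n i hin, hcn, decodeL_encode]
    have h3 : sl.getD i 0 = Encodable.encode L := by
      rw [List.getD_eq_getElem _ _ hilt]
      exact List.getElem_idxOf hilt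
    rw [h3, decodeL_encode, hL]
    rw [List.getD_eq_getElem _ _ (by simp; omega)]
    simp
  have hge : M ≤ n * n + i := by nlinarith
  exact hM (n * n + i) hge hz
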